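/- arXiv:1512.06655 — 2 statements merged into one kernel-verified Lean document; each statement's English description precedes it below -/
import Mathlib

section
/- Let M be a matroid of rank r on a finite ground set E, and let 𝓗 be a collection of subsets of E. Then 𝓗 is the collection of rank-r flats of an erection of M if and only if: (1) every H ∈ 𝓗 has rank r in M; (2) every H ∈ 𝓗 is (r−1)-closed in M; and (3) every basis of M is contained in exactly one member of 𝓗. -/
open Matroid Set Filter Real

namespace PavingEnum

/-- The rank of a matroid: the largest cardinality of a base. -/
noncomputable def mrk {α : Type*} (M : Matroid α) : ℕ :=
  sSup {n : ℕ | ∃ B, M.IsBase B ∧ B.ncard = n}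

/-- The rank of a set in a matroid: the largest cardinality of an
independent subset of the set. -/
noncomputable def mrnk {α : Type*} (M : Matroid α) (X : Set α) : ℕ :=
  sSup {n : ℕ | ∃ I, I ⊆ X ∧ M.Indep I ∧ I.ncard = n}

/-- A circuit is a minimal dependent set. -/
def IsCircuit {α : Type*} (M : Matroid α) (C : Set α) : Prop :=
  M.Dep C ∧ ∀ D, D ⊂ C → M.Indep D

/-- A matroid of rank `r` is paving if every circuit has cardinality at least `r`. -/
def Paving {α : Type*} (M : Matroid α) : Prop :=
  ∀ C, IsCircuit M C → (mrk M : ℕ∞) ≤ C.encard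

/-- A matroid is sparse paving if both it and its dual are paving. -/
def SparsePaving {α : Type*} (M : Matroid α) : Prop :=
  Paving M ∧ Paving M✶

/-- `numMatroids n r` : the number of matroids on the ground set `{1, …, n}` of rank `r`. -/
noncomputable def numMatroids (n r : ℕ) : ℕ :=
  {M : Matroid (Fin n) | M.E = Set.univ ∧ mrk M = r}.ncard

/-- `numPaving n r` : the number of paving matroids on `{1, …, n}` of rank `r`. -/
noncomputable def numPaving (n r : ℕ) : ℕ :=
  {M : Matroid (Fin n) | M.E = Set.univ ∧ mrk M = r ∧ Paving M}.ncard

/-- `numSparsePaving n r` : the number of sparse paving matroids on `{1, …, n}` of rank `r`. -/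
noncomputable def numSparsePaving (n r : ℕ) : ℕ :=
  {M : Matroid (Fin n) | M.E = Set.univ ∧ mrk M = r ∧ SparsePaving M}.ncard

end PavingEnum

namespace PavingEnum

/-- `T` is the truncation of `N`: same ground set, and the independent sets of `T`
are exactly the independent sets of `N` of cardinality at most `rk N − 1`. -/
def IsTruncationOf {α : Type*} (T N : Matroid α) : Prop :=
  T.E = N.E ∧ ∀ I : Set α, T.Indep I ↔ (N.Indep I ∧ I.ncard + 1 ≤ mrk N)

/-- `N` is an erection of `M` if `T(N) = M` or `N = M`. -/
def IsErection {α : Type*} (N M : Matroid α) : Prop :=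
  IsTruncationOf M N ∨ N = M

/-- A set `X` is `k`-closed in `M` if it contains the closure of each of its
subsets of cardinality at most `k`. -/
def KClosed {α : Type*} (M : Matroid α) (k : ℕ) (X : Set α) : Prop :=
  ∀ Y ⊆ X, Y.encard ≤ (k : ℕ∞) → M.closure Y ⊆ X

/-- The `k`-closure of a set: the intersection of all `k`-closed sets containing it. -/
def kClosure {α : Type*} (M : Matroid α) (k : ℕ) (X : Set α) : Set α :=
  ⋂₀ {Y | KClosed M k Y ∧ X ⊆ Y}

/-- A flat `F` of `M` of rank `k` is essential if the restriction `M|F` has a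
nontrivial erection, i.e. there is a matroid on ground set `F` of rank `k+1`
whose truncation is `M|F`. -/
def IsEssentialFlat {α : Type*} (M : Matroid α) (F : Set α) : Prop :=
  M.IsFlat F ∧ ∃ N : Matroid α, N.E = F ∧ mrk N = mrnk M F + 1 ∧ IsTruncationOf (M ↾ F) N

end PavingEnum

open PavingEnum

/-! If `M` is the truncation of `N`, then `M` and `N` share their independent sets of size at most
`r`, so the rank-`r` flats of `N` are exactly the `N`-closures of the bases of `M`; such a flat
contains the `M`-closure of each of its subsets of size less than `r`, and each basis of `M` lies
in exactly one of them.

Conversely, given `𝓗`, the erection is the matroid whose independent sets are those of `M`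
together with the sets `B + e` (`B` a basis of `M`) that lie in no member of `𝓗`. If `H ∈ 𝓗`
contains `B` and `e ∉ H`, the `(r - 1)`-closedness of `H` keeps `e` out of the closure of each
`B - f`, so every `r`-subset `B - f + e` is a basis of `M`; this gives the independence axioms.
The `N`-closure of a basis `B` is then the unique member of `𝓗` containing `B`. -/

namespace Matroid

variable {α : Type*} {M : Matroid α} {B I F X : Set α}

lemma IsBase.mrk_eq (hB : M.IsBase B) : mrk M = B.ncard := by
  refine IsGreatest.csSup_eq ⟨⟨B, hB, rfl⟩, ?_⟩
  rintro n ⟨B', hB', rfl⟩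
  exact (hB'.ncard_eq_ncard_of_isBase hB).le

lemma IsBasis.mrnk_eq [M.RankFinite] (hI : M.IsBasis I X) : mrnk M X = I.ncard := by
  refine IsGreatest.csSup_eq ⟨⟨I, hI.subset, hI.indep, rfl⟩, ?_⟩
  rintro n ⟨J, hJX, hJ, rfl⟩
  obtain ⟨K, hK, hJK⟩ := hJ.subset_isBasis_of_subset hJX
  rw [ncard_def, ncard_def, hI.encard_eq_encard hK]
  exact ENat.toNat_le_toNat (encard_le_encard hJK) hK.indep.finite.encard_lt_top.ne

lemma Indep.ncard_le_mrk [M.RankFinite] (hI : M.Indep I) : I.ncard ≤ mrk M := by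
  obtain ⟨B, hB, hIB⟩ := hI.exists_isBase_superset
  exact hB.mrk_eq ▸ ncard_le_ncard hIB hB.finite

lemma Indep.isBase_of_mrk_le [M.RankFinite] (hI : M.Indep I) (h : mrk M ≤ I.ncard) :
    M.IsBase I := by
  obtain ⟨B, hB, hIB⟩ := hI.exists_isBase_superset
  rwa [eq_of_subset_of_ncard_le hIB (hB.mrk_eq ▸ h) hB.finite]

lemma IsBase.mrnk_eq_of_subset [M.RankFinite] (hB : M.IsBase B) (hBX : B ⊆ X)
    (hX : X ⊆ M.E) : mrnk M X = mrk M := by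
  rw [(hB.isBasis_of_subset hX hBX).mrnk_eq, hB.mrk_eq]

lemma mrnk_ground [M.RankFinite] : mrnk M M.E = mrk M :=
  let ⟨_, hB⟩ := M.exists_isBase
  hB.mrnk_eq_of_subset hB.subset_ground subset_rfl

lemma exists_isBase_subset_of_mrnk_eq [M.RankFinite] (hX : X ⊆ M.E) (h : mrnk M X = mrk M) :
    ∃ B ⊆ X, M.IsBase B := by
  obtain ⟨I, hI⟩ := M.exists_isBasis X
  exact ⟨I, hI.subset, hI.indep.isBase_of_mrk_le (by rw [← h, hI.mrnk_eq])⟩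

lemma Indep.closure_eq_of_isFlat [M.RankFinite] (hI : M.Indep I) (hF : M.IsFlat F)
    (hIF : I ⊆ F) (h : mrnk M F ≤ I.ncard) : M.closure I = F := by
  obtain ⟨J, hJ, hIJ⟩ := hI.subset_isBasis_of_subset hIF
  rw [hJ.mrnk_eq] at h
  obtain rfl := eq_of_subset_of_ncard_le hIJ h hJ.indep.finite
  rw [hJ.closure_eq_closure, hF.closure]

lemma setOf_isFlat_mrnk_eq_mrk [M.RankFinite] :
    {F | M.IsFlat F ∧ mrnk M F = mrk M} = {M.E} := by
  ext F
  refine ⟨fun ⟨hF, hFr⟩ => ?_, ?_⟩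
  · obtain ⟨B, hBF, hB⟩ := exists_isBase_subset_of_mrnk_eq hF.subset_ground hFr
    rw [mem_singleton_iff, ← hB.indep.closure_eq_of_isFlat hF hBF (hFr.trans hB.mrk_eq).le,
      hB.closure_eq]
  · rintro rfl
    exact ⟨M.ground_isFlat, mrnk_ground⟩

end Matroid

namespace PavingEnum.IsTruncationOf

variable {α : Type*} {M N : Matroid α} {B I F Y : Set α} [M.Finite]

lemma finite (hT : IsTruncationOf M N) : N.Finite :=
  ⟨hT.1 ▸ M.ground_finite⟩

lemma mrk_eq (hT : IsTruncationOf M N) : mrk N = mrk M + 1 := by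
  have := hT.finite
  obtain ⟨B, hB⟩ := M.exists_isBase
  obtain ⟨BN, hBN⟩ := N.exists_isBase
  have hle : mrk M + 1 ≤ mrk N := hB.mrk_eq ▸ ((hT.2 B).1 hB.indep).2
  obtain ⟨J, hJBN, hJ⟩ : ∃ J ⊆ BN, J.ncard = mrk N - 1 :=
    exists_subset_card_eq (by rw [← hBN.mrk_eq]; omega)
  have hJM : M.Indep J := (hT.2 J).2 ⟨hBN.indep.subset hJBN, by omega⟩
  have := hJM.ncard_le_mrk
  omega

lemma indep_iff (hT : IsTruncationOf M N) : M.Indep I ↔ N.Indep I ∧ I.ncard ≤ mrk M := by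
  rw [hT.2, hT.mrk_eq, Nat.add_le_add_iff_right]

lemma isBase_iff (hT : IsTruncationOf M N) : M.IsBase B ↔ N.Indep B ∧ B.ncard = mrk M :=
  ⟨fun hB => ⟨(hT.indep_iff.1 hB.indep).1, hB.mrk_eq.symm⟩,
    fun ⟨hBN, hBr⟩ => (hT.indep_iff.2 ⟨hBN, hBr.le⟩).isBase_of_mrk_le hBr.ge⟩

lemma closure_subset_closure (hT : IsTruncationOf M N) (hY : Y.encard < mrk M) :
    M.closure Y ⊆ N.closure Y := by
  obtain ⟨I, hI⟩ := M.exists_isBasis' Y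
  have hIN : N.Indep I := (hT.indep_iff.1 hI.indep).1
  have hIr : I.ncard < mrk M := by
    rw [← Nat.cast_lt (α := ℕ∞), hI.indep.finite.cast_ncard_eq]
    exact (encard_le_encard hI.subset).trans_lt hY
  rw [← hI.closure_eq_closure]
  refine fun e he => N.closure_subset_closure hI.subset ?_
  rw [hIN.mem_closure_iff]
  refine (hI.indep.mem_closure_iff.1 he).imp_left fun hdep => dep_iff.2 ⟨fun hind => ?_,
    hT.1 ▸ hdep.subset_ground⟩
  exact hdep.not_indep (hT.indep_iff.2 ⟨hind, (ncard_insert_le e I).trans (by omega)⟩)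

lemma kClosed_of_isFlat (hT : IsTruncationOf M N) (hM : 1 ≤ mrk M) (hF : N.IsFlat F) :
    KClosed M (mrk M - 1) F := by
  intro Y hYF hY
  have hlt : ((mrk M - 1 : ℕ) : ℕ∞) < mrk M := Nat.cast_lt.2 (by omega)
  rw [← hF.closure]
  exact (hT.closure_subset_closure (hY.trans_lt hlt)).trans (N.closure_subset_closure hYF)

lemma setOf_isFlat_mrnk_eq (hT : IsTruncationOf M N) :
    {F | N.IsFlat F ∧ mrnk N F = mrk M} = N.closure '' {B | M.IsBase B} := by
  have := hT.finite
  ext F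
  refine ⟨fun ⟨hF, hFr⟩ => ?_, ?_⟩
  · obtain ⟨I, hI⟩ := N.exists_isBasis F
    rw [hI.mrnk_eq] at hFr
    exact ⟨I, hT.isBase_iff.2 ⟨hI.indep, hFr⟩, by rw [hI.closure_eq_closure, hF.closure]⟩
  · rintro ⟨B, hB, rfl⟩
    obtain ⟨hBN, hBr⟩ := hT.isBase_iff.1 hB
    exact ⟨N.isFlat_closure B, by rw [hBN.isBasis_closure.mrnk_eq, hBr]⟩

lemma mrnk_closure_eq (hT : IsTruncationOf M N) (hB : M.IsBase B) :
    mrnk M (N.closure B) = mrk M :=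
  hB.mrnk_eq_of_subset (N.subset_closure B (hT.1 ▸ hB.subset_ground))
    (hT.1 ▸ N.closure_subset_ground B)

lemma existsUnique_closure (hT : IsTruncationOf M N) (hB : M.IsBase B) :
    ∃! H, H ∈ N.closure '' {B | M.IsBase B} ∧ B ⊆ H := by
  have := hT.finite
  obtain ⟨hBN, hBr⟩ := hT.isBase_iff.1 hB
  refine ⟨N.closure B, ⟨mem_image_of_mem _ hB, N.subset_closure B hBN.subset_ground⟩, ?_⟩
  rintro _ ⟨⟨B', hB', rfl⟩, hBB'⟩
  obtain ⟨hB'N, hB'r⟩ := hT.isBase_iff.1 hB'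
  exact (hBN.closure_eq_of_isFlat (N.isFlat_closure B') hBB'
    (by rw [hB'N.isBasis_closure.mrnk_eq, hB'r, hBr])).symm

end PavingEnum.IsTruncationOf

namespace PavingEnum

variable {α : Type*} {M N : Matroid α} {𝓗 : Set (Set α)} {B H I J : Set α} {e f : α}

def ErectionIndep (M : Matroid α) (𝓗 : Set (Set α)) (I : Set α) : Prop :=
  M.Indep I ∨ ∃ B e, M.IsBase B ∧ e ∈ M.E \ B ∧ I = insert e B ∧ ∀ H ∈ 𝓗, ¬ I ⊆ H

lemma ErectionIndep.subset_ground (hI : ErectionIndep M 𝓗 I) : I ⊆ M.E := by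
  obtain hI | ⟨B, e, hB, he, rfl, -⟩ := hI
  exacts [hI.subset_ground, insert_subset he.1 hB.subset_ground]

lemma ErectionIndep.indep_or_ncard_eq [M.RankFinite] (hI : ErectionIndep M 𝓗 I) :
    M.Indep I ∨ I.ncard = mrk M + 1 := by
  obtain hI | ⟨B, e, hB, he, rfl, -⟩ := hI
  exacts [Or.inl hI, Or.inr (by rw [ncard_insert_of_notMem he.2 hB.finite, hB.mrk_eq])]

lemma ErectionIndep.ncard_le [M.RankFinite] (hI : ErectionIndep M 𝓗 I) :
    I.ncard ≤ mrk M + 1 := by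
  obtain hI | hI := hI.indep_or_ncard_eq
  exacts [hI.ncard_le_mrk.trans (Nat.le_succ _), hI.le]

lemma erectionIndep_insert_iff (hB : M.IsBase B) (he : e ∈ M.E \ B) :
    ErectionIndep M 𝓗 (insert e B) ↔ ∀ H ∈ 𝓗, ¬ insert e B ⊆ H := by
  refine ⟨?_, fun h => Or.inr ⟨B, e, hB, he, rfl, h⟩⟩
  rintro (hind | ⟨-, -, -, -, -, h⟩)
  exacts [absurd hind (hB.insert_dep he).not_indep, h]

lemma erectionIndep_insert_of_notMem (h3 : ∀ B, M.IsBase B → ∃! H, H ∈ 𝓗 ∧ B ⊆ H)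
    (hB : M.IsBase B) (hH : H ∈ 𝓗) (hBH : B ⊆ H) (he : e ∈ M.E \ H) :
    ErectionIndep M 𝓗 (insert e B) := by
  refine (erectionIndep_insert_iff hB ⟨he.1, fun heB => he.2 (hBH heB)⟩).2 fun H' hH' hsub => ?_
  obtain rfl := (h3 B hB).unique ⟨hH', (subset_insert _ _).trans hsub⟩ ⟨hH, hBH⟩
  exact he.2 (hsub (mem_insert _ _))

lemma indep_insert_sdiff_singleton [M.RankFinite] (hB : M.IsBase B)
    (hH : KClosed M (mrk M - 1) H) (hBH : B ⊆ H) (he : e ∈ M.E \ H) (hf : f ∈ B) :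
    M.Indep (insert e (B \ {f})) := by
  have hBf : M.Indep (B \ {f}) := hB.indep.subset sdiff_subset
  rw [hBf.insert_indep_iff_of_notMem fun heB => he.2 (hBH heB.1)]
  refine ⟨he.1, fun hcl => he.2 (hH _ (sdiff_subset.trans hBH) ?_ hcl)⟩
  rw [← hBf.finite.cast_ncard_eq, ncard_sdiff_singleton_of_mem hf, hB.mrk_eq]

lemma ErectionIndep.subset [M.RankFinite] (h2 : ∀ H ∈ 𝓗, KClosed M (mrk M - 1) H)
    (h3 : ∀ B, M.IsBase B → ∃ H ∈ 𝓗, B ⊆ H) (hJ : ErectionIndep M 𝓗 J) (hIJ : I ⊆ J) :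
    ErectionIndep M 𝓗 I := by
  obtain hJ | ⟨B, e, hB, he, rfl, hJH⟩ := hJ
  · exact Or.inl (hJ.subset hIJ)
  by_cases hJI : insert e B ⊆ I
  · rw [hIJ.antisymm hJI]
    exact Or.inr ⟨B, e, hB, he, rfl, hJH⟩
  obtain ⟨f, hfJ, hfI⟩ := not_subset.1 hJI
  refine Or.inl (Indep.subset ?_ (subset_sdiff_singleton hIJ hfI))
  obtain ⟨H, hH, hBH⟩ := h3 B hB
  rcases hfJ with rfl | hfB
  · rw [insert_sdiff_self_of_notMem he.2]
    exact hB.indep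
  · have hef : e ≠ f := fun h => he.2 (h ▸ hfB)
    rw [← insert_sdiff_singleton_comm hef]
    exact indep_insert_sdiff_singleton hB (h2 H hH) hBH
      ⟨he.1, fun heH => hJH H hH (insert_subset heH hBH)⟩ hfB

lemma ErectionIndep.exists_insert_of_ncard_lt [M.RankFinite]
    (h3 : ∀ B, M.IsBase B → ∃! H, H ∈ 𝓗 ∧ B ⊆ H) (hI : ErectionIndep M 𝓗 I)
    (hJ : ErectionIndep M 𝓗 J) (hIJ : I.ncard < J.ncard) :
    ∃ e ∈ J, e ∉ I ∧ ErectionIndep M 𝓗 (insert e I) := by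
  have hJr := hJ.ncard_le
  have hJE := hJ.subset_ground
  obtain hI | hI := hI.indep_or_ncard_eq
  swap
  · omega
  have augment : ∀ {K}, M.Indep K → I.ncard < K.ncard → ∃ e ∈ K \ I, M.Indep (insert e I) :=
    fun hK hIK => hI.augment hK (by
      rwa [← hI.finite.cast_ncard_eq, ← hK.finite.cast_ncard_eq, Nat.cast_lt])
  obtain hJ' | ⟨B, e, hB, he, rfl, hJH⟩ := hJ
  · obtain ⟨x, hx, hind⟩ := augment hJ' hIJ
    exact ⟨x, hx.1, hx.2, Or.inl hind⟩
  obtain hlt | heq := hI.ncard_le_mrk.lt_or_eq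
  · obtain ⟨x, hx, hind⟩ := augment hB.indep (hB.mrk_eq ▸ hlt)
    exact ⟨x, mem_insert_of_mem _ hx.1, hx.2, Or.inl hind⟩
  have hIB : M.IsBase I := hI.isBase_of_mrk_le heq.ge
  obtain ⟨H, ⟨hH, hIH⟩, -⟩ := h3 I hIB
  obtain ⟨x, hxJ, hxH⟩ := not_subset.1 (hJH H hH)
  exact ⟨x, hxJ, fun hxI => hxH (hIH hxI),
    erectionIndep_insert_of_notMem h3 hIB hH hIH ⟨hJE hxJ, hxH⟩⟩

lemma exists_matroid_indep_iff_erectionIndep [M.Finite]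
    (h2 : ∀ H ∈ 𝓗, KClosed M (mrk M - 1) H) (h3 : ∀ B, M.IsBase B → ∃! H, H ∈ 𝓗 ∧ B ⊆ H) :
    ∃ N : Matroid α, N.E = M.E ∧ ∀ I, N.Indep I ↔ ErectionIndep M 𝓗 I :=
  ⟨(IndepMatroid.ofFinite M.ground_finite (ErectionIndep M 𝓗) (Or.inl M.empty_indep)
    (fun _ _ hJ hIJ => hJ.subset h2 (fun B hB => (h3 B hB).exists) hIJ)
    (fun _ _ hI hJ hIJ => hI.exists_insert_of_ncard_lt h3 hJ hIJ)
    (fun _ hI => hI.subset_ground)).matroid, rfl, fun _ => Iff.rfl⟩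

lemma isTruncationOf_of_indep_iff_erectionIndep [M.Finite] (h𝓗 : ∀ H ∈ 𝓗, H ⊂ M.E)
    (h3 : ∀ B, M.IsBase B → ∃! H, H ∈ 𝓗 ∧ B ⊆ H) (hNE : N.E = M.E)
    (hN : ∀ I, N.Indep I ↔ ErectionIndep M 𝓗 I) : IsTruncationOf M N := by
  have : N.Finite := ⟨hNE ▸ M.ground_finite⟩
  have hmrk : mrk N = mrk M + 1 := by
    obtain ⟨B, hB⟩ := M.exists_isBase
    obtain ⟨H, ⟨hH, hBH⟩, -⟩ := h3 B hB
    obtain ⟨e, heE, heH⟩ := exists_of_ssubset (h𝓗 H hH)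
    have heB : e ∉ B := fun heB => heH (hBH heB)
    obtain ⟨BN, hBN, hBBN⟩ := ((hN _).2
      (erectionIndep_insert_of_notMem h3 hB hH hBH ⟨heE, heH⟩)).exists_isBase_superset
    refine hBN.mrk_eq ▸ le_antisymm ((hN BN).1 hBN.indep).ncard_le ?_
    calc mrk M + 1 = (insert e B).ncard := by rw [ncard_insert_of_notMem heB hB.finite, hB.mrk_eq]
      _ ≤ BN.ncard := ncard_le_ncard hBBN hBN.finite
  refine ⟨hNE.symm, fun I => ?_⟩
  rw [hmrk, hN, Nat.add_le_add_iff_right]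
  refine ⟨fun hI => ⟨Or.inl hI, hI.ncard_le_mrk⟩, fun ⟨hI, hIr⟩ => ?_⟩
  obtain hI | hI := hI.indep_or_ncard_eq
  · exact hI
  · omega

lemma closure_eq_of_indep_iff_erectionIndep (h𝓗 : ∀ H ∈ 𝓗, H ⊆ M.E)
    (h3 : ∀ B, M.IsBase B → ∃! H, H ∈ 𝓗 ∧ B ⊆ H) (hNE : N.E = M.E)
    (hN : ∀ I, N.Indep I ↔ ErectionIndep M 𝓗 I) (hB : M.IsBase B) (hH : H ∈ 𝓗) (hBH : B ⊆ H) :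
    N.closure B = H := by
  have hBN : N.Indep B := (hN B).2 (Or.inl hB.indep)
  ext e
  by_cases heB : e ∈ B
  · exact iff_of_true (N.subset_closure B hBN.subset_ground heB) (hBH heB)
  by_cases heE : e ∈ M.E
  swap
  · exact iff_of_false (fun he => heE (hNE ▸ N.closure_subset_ground B he))
      (fun he => heE (h𝓗 H hH he))
  rw [hBN.mem_closure_iff_of_notMem heB,
    ← not_indep_iff (insert_subset (hNE ▸ heE) hBN.subset_ground), hN,
    erectionIndep_insert_iff hB ⟨heE, heB⟩]
  simp only [not_forall, not_not, exists_prop]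
  refine ⟨fun ⟨H', hH', hsub⟩ => ?_, fun heH => ⟨H, hH, insert_subset heH hBH⟩⟩
  obtain rfl := (h3 B hB).unique ⟨hH', (subset_insert _ _).trans hsub⟩ ⟨hH, hBH⟩
  exact hsub (mem_insert _ _)

lemma image_closure_setOf_isBase_eq [M.RankFinite] (h1 : ∀ H ∈ 𝓗, mrnk M H = mrk M)
    (h𝓗 : ∀ H ∈ 𝓗, H ⊆ M.E) (h3 : ∀ B, M.IsBase B → ∃ H ∈ 𝓗, B ⊆ H)
    (hcl : ∀ B H, M.IsBase B → H ∈ 𝓗 → B ⊆ H → N.closure B = H) :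
    N.closure '' {B | M.IsBase B} = 𝓗 := by
  ext H
  refine ⟨fun ⟨B, hB, hBH⟩ => ?_, fun hH => ?_⟩
  · obtain ⟨H', hH', hBH'⟩ := h3 B hB
    rwa [← hBH, hcl B H' hB hH' hBH']
  · obtain ⟨B, hBH, hB⟩ := exists_isBase_subset_of_mrnk_eq (h𝓗 H hH) (h1 H hH)
    exact ⟨B, hB, hcl B H hB hH hBH⟩

lemma eq_singleton_ground_of_ground_mem [M.RankFinite] (h1 : ∀ H ∈ 𝓗, mrnk M H = mrk M)
    (h𝓗 : ∀ H ∈ 𝓗, H ⊆ M.E) (h3 : ∀ B, M.IsBase B → ∃! H, H ∈ 𝓗 ∧ B ⊆ H) (hE𝓗 : M.E ∈ 𝓗) :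
    𝓗 = {M.E} := by
  refine subset_antisymm (fun H hH => ?_) (singleton_subset_iff.2 hE𝓗)
  obtain ⟨B, hBH, hB⟩ := exists_isBase_subset_of_mrnk_eq (h𝓗 H hH) (h1 H hH)
  exact (h3 B hB).unique ⟨hH, hBH⟩ ⟨hE𝓗, hB.subset_ground⟩

end PavingEnum

/-- Crapo's theorem: for a matroid M of rank r ≥ 1 on a finite ground set E and a
collection 𝓗 of subsets of E, 𝓗 is the collection of rank-r flats of an erection
of M if and only if (1) each H ∈ 𝓗 has rank r in M, (2) each H ∈ 𝓗 is
(r−1)-closed in M, and (3) each basis of M is contained in exactly one member of 𝓗. -/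
theorem crapo_erection_characterisation {α : Type*} (M : Matroid α) (r : ℕ)
    (hE : M.E.Finite) (hrk : mrk M = r) (hr : 1 ≤ r)
    (𝓗 : Set (Set α)) (h𝓗 : ∀ H ∈ 𝓗, H ⊆ M.E) :
    (∃ N : Matroid α, IsErection N M ∧ 𝓗 = {F : Set α | N.IsFlat F ∧ mrnk N F = r}) ↔
      ((∀ H ∈ 𝓗, mrnk M H = r) ∧
        (∀ H ∈ 𝓗, KClosed M (r - 1) H) ∧
        (∀ B : Set α, M.IsBase B → ∃! H, H ∈ 𝓗 ∧ B ⊆ H)) := by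
  have : M.Finite := ⟨hE⟩
  subst hrk
  constructor
  · rintro ⟨N, hT | rfl, rfl⟩
    · rw [hT.setOf_isFlat_mrnk_eq]
      exact ⟨forall_mem_image.2 fun B hB => hT.mrnk_closure_eq hB,
        forall_mem_image.2 fun B _ => hT.kClosed_of_isFlat hr (N.isFlat_closure B),
        fun B hB => hT.existsUnique_closure hB⟩
    · simp only [setOf_isFlat_mrnk_eq_mrk, mem_singleton_iff, forall_eq]
      exact ⟨mrnk_ground, fun Y _ _ => N.closure_subset_ground Y,
        fun B hB => ⟨N.E, ⟨rfl, hB.subset_ground⟩, fun H hH => hH.1⟩⟩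
  · rintro ⟨h1, h2, h3⟩
    by_cases hE𝓗 : M.E ∈ 𝓗
    · exact ⟨M, Or.inr rfl, by
        rw [setOf_isFlat_mrnk_eq_mrk, eq_singleton_ground_of_ground_mem h1 h𝓗 h3 hE𝓗]⟩
    obtain ⟨N, hNE, hN⟩ := exists_matroid_indep_iff_erectionIndep h2 h3
    have hT : IsTruncationOf M N := isTruncationOf_of_indep_iff_erectionIndep
      (fun H hH => (h𝓗 H hH).ssubset_of_ne fun h => hE𝓗 (h ▸ hH)) h3 hNE hN
    refine ⟨N, Or.inl hT, ?_⟩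
    rw [hT.setOf_isFlat_mrnk_eq, image_closure_setOf_isBase_eq h1 h𝓗 (fun B hB => (h3 B hB).exists)
      fun B H hB hH hBH => closure_eq_of_indep_iff_erectionIndep h𝓗 h3 hNE hN hB hH hBH]
end

section
/- Let M be a matroid on a finite ground set E, and let F be a flat of M of rank k ≥ 1. If there exists an independent set I of M with cl_{k−1}(I) = F, then F is not essential; that is, there is no matroid N on ground set F of rank k+1 whose truncation equals the restriction M|F. -/
open Matroid Set Filter Real

open PavingEnum

/-! Let `N` be a rank-`(k+1)` matroid on `F` truncating to `M ↾ F`. Sets of size at most `k`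
are independent in `M ↾ F` exactly when they are in `N`, so `M` and `N` have the same closure
on sets of size at most `k - 1`. Hence `N.closure I` is `(k-1)`-closed in `M` and contains
`cl_{k-1}(I) = F`: the set `I` spans `N`. But `I` is independent in the truncation, so
`|I| < rk N`, a contradiction. -/

namespace PavingEnum

variable {α : Type*}

lemma mrk_eq_ncard_of_isBase {N : Matroid α} {B : Set α} (hB : N.IsBase B) :
    mrk N = B.ncard := by
  have hranks : {n : ℕ | ∃ B, N.IsBase B ∧ B.ncard = n} = {B.ncard} := by
    ext n
    constructor
    · rintro ⟨B', hB', rfl⟩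
      exact hB'.ncard_eq_ncard_of_isBase hB
    · rintro rfl
      exact ⟨B, hB, rfl⟩
  rw [mrk, hranks, csSup_singleton]

lemma subset_kClosure (M : Matroid α) (k : ℕ) (X : Set α) : X ⊆ kClosure M k X :=
  fun _ hx ↦ mem_sInter.2 fun _ hY ↦ hY.2 hx

lemma kClosure_subset {M : Matroid α} {k : ℕ} {X Y : Set α} (hY : KClosed M k Y)
    (hXY : X ⊆ Y) : kClosure M k X ⊆ Y :=
  sInter_subset_of_mem ⟨hY, hXY⟩

namespace IsTruncationOf

variable {T N : Matroid α}

lemma indep_iff_of_ncard_lt (hTN : IsTruncationOf T N) {J : Set α} (hJ : J.ncard < mrk N) :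
    T.Indep J ↔ N.Indep J := by
  rw [hTN.2 J, and_iff_left (Nat.succ_le_of_lt hJ)]

lemma closure_eq_of_indep (hTN : IsTruncationOf T N) {J : Set α} (hJ : N.Indep J)
    (hJcard : J.ncard + 2 ≤ mrk N) : T.closure J = N.closure J := by
  have hJT : T.Indep J := (hTN.indep_iff_of_ncard_lt (by omega)).2 hJ
  ext x
  have hins : T.Indep (insert x J) ↔ N.Indep (insert x J) :=
    hTN.indep_iff_of_ncard_lt (by have := ncard_insert_le x J; omega)
  rw [hJT.mem_closure_iff', hJ.mem_closure_iff', hins, hTN.1]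

lemma closure_eq_of_ncard (hTN : IsTruncationOf T N) {Y : Set α} (hYE : Y ⊆ N.E)
    (hYfin : Y.Finite) (hYcard : Y.ncard + 2 ≤ mrk N) : T.closure Y = N.closure Y := by
  obtain ⟨J, hJ⟩ := N.exists_isBasis Y
  have hJT : T.closure J = N.closure J :=
    hTN.closure_eq_of_indep hJ.indep (by have := ncard_le_ncard hJ.subset hYfin; omega)
  rw [← hJ.closure_eq_closure, ← hJT]
  exact (T.closure_subset_closure_of_subset_closure (hJT ▸ hJ.subset_closure)).antisymm
    (T.closure_subset_closure hJ.subset)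

lemma kClosed_closure {M : Matroid α} {F : Set α} {k : ℕ} (hF : M.IsFlat F)
    (hTN : IsTruncationOf (M ↾ F) N) (hk : k + 2 ≤ mrk N) (X : Set α) :
    KClosed M k (N.closure X) := by
  intro Y hYX hYcard
  obtain ⟨hYfin, hYk⟩ := encard_le_coe_iff_finite_ncard_le.1 hYcard
  have hYN : Y ⊆ N.E := hYX.trans (N.closure_subset_ground X)
  have hYF : Y ⊆ F := hYN.trans_eq hTN.1.symm
  have hMN : M.closure Y = N.closure Y := by
    rw [← hTN.closure_eq_of_ncard hYN hYfin (by omega),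
      restrict_closure_eq _ hYF hF.subset_ground, inter_eq_self_of_subset_left ((M.closure_subset_closure hYF).trans_eq hF.closure)]
  exact hMN ▸ N.closure_subset_closure_of_subset_closure hYX

end IsTruncationOf

end PavingEnum

theorem flat_not_essential_general {α : Type*} (M : Matroid α)
    (F : Set α) (k : ℕ) (hF : M.IsFlat F) (hk : 1 ≤ k)
    (I : Set α) (hI : M.Indep I) (hIF : kClosure M (k - 1) I = F) :
    ¬ ∃ N : Matroid α, N.E = F ∧ mrk N = k + 1 ∧ IsTruncationOf (M ↾ F) N := by
  rintro ⟨N, hNE, hNrk, hTN⟩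
  have hIsubF : I ⊆ F := hIF ▸ subset_kClosure M (k - 1) I
  obtain ⟨hIN, hIcard⟩ := (hTN.2 I).1 (restrict_indep_iff.2 ⟨hI, hIsubF⟩)
  have hFN : F ⊆ N.closure I := hIF ▸ kClosure_subset
    (hTN.kClosed_closure hF (by omega) I) (N.subset_closure I (hNE ▸ hIsubF))
  have hIB : N.IsBase I := hIN.isBase_of_ground_subset_closure (hNE ▸ hFN)
  have hrk := mrk_eq_ncard_of_isBase hIB
  omega

/-- If F is a flat of M of rank k ≥ 1 and cl_{k−1}(I) = F for some independent set I
of M, then F is not essential: there is no matroid N on ground set F of rank k+1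
whose truncation is the restriction M|F. -/
theorem flat_not_essential {α : Type*} (M : Matroid α) (hE : M.E.Finite)
    (F : Set α) (k : ℕ) (hF : M.IsFlat F) (hFk : mrnk M F = k) (hk : 1 ≤ k)
    (I : Set α) (hI : M.Indep I) (hIF : kClosure M (k - 1) I = F) :
    ¬ ∃ N : Matroid α, N.E = F ∧ mrk N = k + 1 ∧ IsTruncationOf (M ↾ F) N :=
  flat_not_essential_general M F k hF hk I hI hIF
end
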